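/- Let $Y$ be a metric space and $\{f_n\}$ a sequence of functions $f_n : Y \to \mathbb{R}\cup\{+\infty\}$ such that $L := \lim_{n\to\infty}\inf_{y\in Y} f_n(y)$ exists and is finite. Suppose that for every $\epsilon > 0$ there exist a compact set $K \subset Y$ and a subsequence $\{f_{n_j}\}$ with $\inf_{y\in K} f_{n_j}(y) \le \inf_{y\in Y} f_{n_j}(y) + \epsilon$ for all sufficiently large $j$. Then $L = \inf_{y\in Y}(\underline{\mathrm{e\text{-}lim}}_n f_n)(y)$, where $\underline{\mathrm{e\text{-}lim}}_n f_n$ denotes the lower epi-limit of $\{f_n\}$. -/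
import Mathlib


open Filter

/-- The lower epi-limit of a sequence of extended-real-valued functions:
`(e-liminf f)(y) = inf { liminf_k f_{n_k}(y_k) | {n_k} a subsequence, y_k → y }`,
equivalently the function whose epigraph is the outer (Kuratowski upper) limit
of the epigraphs of the `f n`. -/
noncomputable def lowerEpiLim {Y : Type*} [MetricSpace Y] (f : ℕ → Y → EReal) (y : Y) : EReal :=
  ⨅ p : {p : (ℕ → ℕ) × (ℕ → Y) // StrictMono p.1 ∧ Tendsto p.2 atTop (nhds y)},
    liminf (fun k => f ((p : (ℕ → ℕ) × (ℕ → Y)).1 k) ((p : (ℕ → ℕ) × (ℕ → Y)).2 k)) atTop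

theorem compact_near_minimizers_implies_epi_lim_inf {Y : Type*} [MetricSpace Y]
    (f : ℕ → Y → EReal) (hbot : ∀ n y, f n y ≠ ⊥) (L : ℝ)
    (hL : Tendsto (fun n => ⨅ y, f n y) atTop (nhds (L : EReal)))
    (hcpt : ∀ ε : ℝ, 0 < ε → ∃ K : Set Y, IsCompact K ∧ ∃ φ : ℕ → ℕ, StrictMono φ ∧
      ∃ J : ℕ, ∀ j ≥ J, (⨅ y ∈ K, f (φ j) y) ≤ (⨅ y, f (φ j) y) + (ε : EReal)) :
    (⨅ y, lowerEpiLim f y) = (L : EReal) := by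
  apply le_antisymm
  · -- inf ≤ L
    rw [← EReal.le_of_forall_lt_iff_le]
    intro z hz
    set ε : ℝ := (z - L) / 3 with hε
    have hεpos : 0 < ε := by
      have : L < z := by exact_mod_cast hz
      linarith
    obtain ⟨K, hK, φ, hφ, J, hJ⟩ := hcpt ε hεpos
    -- eventually inf f(φ j) ≤ L + ε
    have h1 : ∀ᶠ j in atTop, (⨅ y, f (φ j) y) < (L : EReal) + (ε : EReal) := by
      have : Tendsto (fun j => ⨅ y, f (φ j) y) atTop (nhds (L : EReal)) :=
        hL.comp hφ.tendsto_atTop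
      apply this.eventually_lt_const
      rw [← EReal.coe_add]
      exact_mod_cast (lt_add_iff_pos_right L).2 hεpos
    obtain ⟨J₂, hJ₂⟩ := eventually_atTop.1 h1
    set J₃ := max J J₂ with hJ₃
    have key : ∀ j, ∃ y ∈ K, f (φ (j + J₃)) y < ((L + 3*ε : ℝ) : EReal) := by
      intro j
      have h2 : (⨅ y ∈ K, f (φ (j + J₃)) y) < ((L + 3*ε : ℝ) : EReal) := by
        calc (⨅ y ∈ K, f (φ (j + J₃)) y) ≤ (⨅ y, f (φ (j + J₃)) y) + (ε : EReal) :=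
              hJ _ (le_trans (le_max_left _ _) (Nat.le_add_left _ _))
          _ ≤ ((L : EReal) + ε) + ε := by
              gcongr
              exact (hJ₂ _ (le_trans (le_max_right _ _) (Nat.le_add_left _ _))).le
          _ < ((L + 3*ε : ℝ) : EReal) := by
              rw [← EReal.coe_add, ← EReal.coe_add]
              exact_mod_cast by linarith
      simpa using (iInf_lt_iff.1 (lt_of_le_of_lt (le_refl _) h2)).imp
        (fun y hy => by simpa using iInf_lt_iff.1 hy)
    choose z hzK hzlt using key
    obtain ⟨y, hyK, ψ, hψ, hyt⟩ := hK.tendsto_subseq hzK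
    have hmono : StrictMono (fun k => φ (ψ k + J₃)) :=
      hφ.comp fun a b hab => by have := hψ hab; omega
    have hle : lowerEpiLim f y ≤ liminf (fun k => f (φ (ψ k + J₃)) (z (ψ k))) atTop :=
      iInf_le_of_le ⟨(fun k => φ (ψ k + J₃), fun k => z (ψ k)), hmono, hyt⟩ le_rfl
    have h3 : liminf (fun k => f (φ (ψ k + J₃)) (z (ψ k))) atTop ≤ ((L + 3*ε : ℝ) : EReal) :=
      liminf_le_of_frequently_le' (Frequently.of_forall fun k => (hzlt (ψ k)).le)
    have : (⨅ y, lowerEpiLim f y) ≤ ((L + 3*ε : ℝ) : EReal) :=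
      le_trans (iInf_le _ y) (le_trans hle h3)
    convert this using 2
    rw [hε]; ring
  · -- L ≤ inf
    refine le_iInf fun y => le_iInf fun p => ?_
    obtain ⟨⟨φ, ys⟩, hφ, hys⟩ := p
    have : Tendsto (fun k => ⨅ y, f (φ k) y) atTop (nhds (L : EReal)) :=
      hL.comp hφ.tendsto_atTop
    calc (L : EReal) = liminf (fun k => ⨅ y, f (φ k) y) atTop := this.liminf_eq.symm
      _ ≤ liminf (fun k => f (φ k) (ys k)) atTop :=
          liminf_le_liminf (Eventually.of_forall fun k => iInf_le _ _)
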